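/- arXiv:2312.04235 — 2 statements merged into one kernel-verified Lean document; each statement's English description precedes it below -/
import Mathlib

section
/- For all natural numbers h and k there exists a constant c such that the following holds: if G is a graph of highway dimension at most h, r > 0, C is an (r,k) vertex cover of G, and B ⊆ C, then in the graph IG with vertex set B having an edge between distinct b, b' ∈ B whenever d(b,b') ≤ 3r, every vertex has degree at most c. -/
open SimpleGraph

/-- The length (total weight) of a walk under an edge-weight function `w`. -/
noncomputable def wlen {V : Type*} {G : SimpleGraph V} (w : Sym2 V → ℝ) {u v : V}
    (p : G.Walk u v) : ℝ :=
  (p.edges.map w).sum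

/-- `p` is a subwalk (subpath) of `q`. -/
def IsSubwalk {V : Type*} {G : SimpleGraph V} {u v a b : V}
    (p : G.Walk u v) (q : G.Walk a b) : Prop :=
  ∃ (q1 : G.Walk a u) (q2 : G.Walk v b), q = (q1.append p).append q2


section lems
variable {V : Type*} {G : SimpleGraph V} {w : Sym2 V → ℝ} {u v a b x y : V}

lemma IsSubwalk.trans {p : G.Walk u v} {q : G.Walk a b} {t : G.Walk x y}
    (h1 : IsSubwalk p q) (h2 : IsSubwalk q t) : IsSubwalk p t := by
  obtain ⟨q1, q2, rfl⟩ := h1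
  obtain ⟨Q1, Q2, rfl⟩ := h2
  exact ⟨Q1.append q1, q2.append Q2, by simp [SimpleGraph.Walk.append_assoc]⟩

lemma IsSubwalk.refl (p : G.Walk u v) : IsSubwalk p p :=
  ⟨SimpleGraph.Walk.nil, SimpleGraph.Walk.nil, by simp⟩

end lems

/-- Shortest-path distance as the infimum of walk lengths. -/
noncomputable def wdist {V : Type*} (G : SimpleGraph V) (w : Sym2 V → ℝ) (u v : V) : ℝ :=
  sInf {x : ℝ | ∃ p : G.Walk u v, x = wlen w p}

/-- A finite connected positively-weighted graph (all weights at least 1) with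
unique shortest paths, in which every edge is the unique shortest path between
its endpoints.  `sp u v` is the unique shortest path from `u` to `v`. -/
structure Setting (V : Type) [Fintype V] where
  G : SimpleGraph V
  w : Sym2 V → ℝ
  connected : G.Connected
  one_le_w : ∀ e ∈ G.edgeSet, 1 ≤ w e
  sp : ∀ u v : V, G.Walk u v
  sp_isPath : ∀ u v : V, (sp u v).IsPath
  sp_shortest : ∀ (u v : V) (q : G.Walk u v), wlen w (sp u v) ≤ wlen w q
  sp_unique : ∀ (u v : V) (q : G.Walk u v), q.IsPath →
    wlen w q = wlen w (sp u v) → q = sp u v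
  edge_sp : ∀ (u v : V) (h : G.Adj u v),
    sp u v = SimpleGraph.Walk.cons h SimpleGraph.Walk.nil

namespace Setting

variable {V : Type} [Fintype V]

/-- Shortest-path distance `d(u,v)`. -/
noncomputable def d (S : Setting V) (u v : V) : ℝ := wlen S.w (S.sp u v)

/-- The ball `B(v,r)`. -/
def ball (S : Setting V) (v : V) (r : ℝ) : Set V := {u : V | S.d v u ≤ r}

/-- `maxedge(p(u,v)) ≤ r`: every edge of the shortest path has weight at most `r`. -/
def maxedgeLE (S : Setting V) (u v : V) (r : ℝ) : Prop :=
  ∀ e ∈ (S.sp u v).edges, S.w e ≤ r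

/-- An `(r,k)` vertex cover. -/
def IsVertexCover (S : Setting V) (r : ℝ) (k : ℕ) (C : Set V) : Prop :=
  (∀ v1 v2 : V, r < S.d v1 v2 → S.maxedgeLE v1 v2 r →
      ∃ c ∈ C, c ∈ (S.sp v1 v2).support) ∧
  (∀ v : V, (S.ball v (2 * r) ∩ C).ncard ≤ k)

/-- Discrete highway dimension at most `h`. -/
def DiscreteHDLE (S : Setting V) (h : ℕ) : Prop :=
  ∀ (v : V) (r : ℝ), 0 < r →
    ∃ C : Set V, C.ncard ≤ h ∧
      ∀ v1 v2 : V, (∀ x ∈ (S.sp v1 v2).support, x ∈ S.ball v (4 * r)) →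
        r < S.d v1 v2 → ∃ c ∈ C, c ∈ (S.sp v1 v2).support

/-- The (unique) shortest path from `v1` to `v2` is `r`-significant:
it has an `r`-witness. -/
def RSignificant (S : Setting V) (r : ℝ) (v1 v2 : V) : Prop :=
  ∃ a b : V, (a = v1 ∨ S.G.Adj a v1) ∧ (b = v2 ∨ S.G.Adj b v2) ∧
    r ≤ S.d a b ∧ IsSubwalk (S.sp v1 v2) (S.sp a b)

/-- The shortest path from `v1` to `v2` is `(r,2r)`-close to `v`,
i.e. it belongs to `S(v,r)`. -/
def InSvr (S : Setting V) (v : V) (r : ℝ) (v1 v2 : V) : Prop :=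
  ∃ a b : V, (a = v1 ∨ S.G.Adj a v1) ∧ (b = v2 ∨ S.G.Adj b v2) ∧
    r ≤ S.d a b ∧ IsSubwalk (S.sp v1 v2) (S.sp a b) ∧
    ∃ x ∈ (S.sp a b).support, S.d v x ≤ 2 * r

/-- Highway dimension at most `h`. -/
def HighwayDimLE (S : Setting V) (h : ℕ) : Prop :=
  ∀ (r : ℝ), 0 < r → ∀ v : V,
    ∃ C : Set V, C.ncard ≤ h ∧
      ∀ v1 v2 : V, S.InSvr v r v1 v2 → ∃ c ∈ C, c ∈ (S.sp v1 v2).support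

/-- An `(r,h')`-SPHS. -/
def IsSPHS (S : Setting V) (r : ℝ) (h' : ℕ) (C : Set V) : Prop :=
  (∀ v1 v2 : V, S.RSignificant r v1 v2 → ∃ c ∈ C, c ∈ (S.sp v1 v2).support) ∧
  (∀ v : V, (C ∩ S.ball v (2 * r)).ncard ≤ h')

/-- Adjacency in the `r`-shortcut graph `G(C,r)`. -/
def shortcutAdj (S : Setting V) (C : Set V) (r : ℝ) (v1 v2 : V) : Prop :=
  v1 ≠ v2 ∧ v1 ∈ C ∧ v2 ∈ C ∧ S.d v1 v2 ≤ r ∧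
    ∀ c ∈ C, c ∈ (S.sp v1 v2).support → c = v1 ∨ c = v2

/-- An `(r,η)` path cover, a set of shortest paths represented by their
endpoint pairs. -/
def IsPathCover (S : Setting V) (r : ℝ) (η : ℕ) (P : Set (V × V)) : Prop :=
  (∀ q ∈ P, r / 4 ≤ S.d q.1 q.2 ∧ S.d q.1 q.2 ≤ r) ∧
  (∀ v1 v2 : V, r / 2 ≤ S.d v1 v2 → S.d v1 v2 ≤ r → S.maxedgeLE v1 v2 (r / 8) →
    ∃ q ∈ P, IsSubwalk (S.sp q.1 q.2) (S.sp v1 v2) ∧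
      S.d v1 q.1 ≤ r / 8 ∧ S.d q.2 v2 ≤ r / 8) ∧
  (∀ v : V, {q ∈ P | ∃ x ∈ (S.sp q.1 q.2).support, S.d v x ≤ 4 * r}.ncard ≤ η)

/-- A pair of vertices of `Cm` is *considered* at level `i`. -/
def Considered (S : Setting V) (Cm : Set V) (i : ℤ) (q : V × V) : Prop :=
  q.1 ∈ Cm ∧ q.2 ∈ Cm ∧
    3 / 4 * (8 : ℝ) ^ i ≤ S.d q.1 q.2 ∧ S.d q.1 q.2 ≤ (8 : ℝ) ^ i ∧
    S.maxedgeLE q.1 q.2 ((8 : ℝ) ^ (i - 1))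

/-- `C'` is a valid output of the greedy construction at level `i` from `Cm`. -/
def ValidGreedy (S : Setting V) (Cm : Set V) (i : ℤ) (C' : Set V) : Prop :=
  ∃ (m : ℕ) (q : Fin m → V × V),
    Function.Injective q ∧
    (∀ p : V × V, S.Considered Cm i p ↔ ∃ j : Fin m, q j = p) ∧
    ∃ Sc : Fin (m + 1) → Set V,
      Sc 0 = ∅ ∧ Sc (Fin.last m) = C' ∧
      ∀ j : Fin m,
        ((∃ c ∈ Sc j.castSucc, c ∈ (S.sp (q j).1 (q j).2).support) →
          Sc j.succ = Sc j.castSucc) ∧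
        ((¬ ∃ c ∈ Sc j.castSucc, c ∈ (S.sp (q j).1 (q j).2).support) →
          ∃ c ∈ Cm, c ∈ (S.sp (q j).1 (q j).2).support ∧
            (∀ c' ∈ Cm, c' ∈ (S.sp (q j).1 (q j).2).support →
              |S.d (q j).1 c - S.d (q j).1 (q j).2 / 2| ≤
                |S.d (q j).1 c' - S.d (q j).1 (q j).2 / 2|) ∧
            Sc j.succ = insert c (Sc j.castSucc))

/-- The set of endpoints of edges of weight greater than `t`. -/
def bigEdgeEnds (S : Setting V) (t : ℝ) : Set V :=
  {x : V | ∃ e ∈ S.G.edgeSet, t < S.w e ∧ x ∈ e}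

end Setting

section setlems
variable {V : Type} [Fintype V] (S : Setting V)

lemma Setting.wlen_append' {u v a : V} (p : S.G.Walk u v) (q : S.G.Walk v a) :
    wlen S.w (p.append q) = wlen S.w p + wlen S.w q := by
  simp [wlen, SimpleGraph.Walk.edges_append]

lemma Setting.wlen_nonneg' {u v : V} (p : S.G.Walk u v) : 0 ≤ wlen S.w p := by
  apply List.sum_nonneg
  intro a ha
  obtain ⟨e, he, rfl⟩ := List.mem_map.mp ha
  exact le_trans zero_le_one (S.one_le_w e (p.edges_subset_edgeSet he))

lemma Setting.d_nonneg (u v : V) : 0 ≤ S.d u v := S.wlen_nonneg' _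

lemma Setting.d_le {u v : V} (q : S.G.Walk u v) : S.d u v ≤ wlen S.w q :=
  S.sp_shortest u v q

/-- A subwalk of the shortest path is the shortest path between its endpoints. -/
lemma Setting.subwalk_eq_sp {u v a b : V} {p : S.G.Walk u v}
    (h : IsSubwalk p (S.sp a b)) : p = S.sp u v ∧ wlen S.w p = S.d u v := by
  obtain ⟨q1, q2, hq⟩ := h
  have hpath : p.IsPath := by
    have := S.sp_isPath a b
    rw [hq] at this
    exact this.of_append_left.of_append_right
  have h1 : S.d u v ≤ wlen S.w p := S.d_le p
  have h2 : wlen S.w p ≤ S.d u v := by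
    have hs := S.sp_shortest a b ((q1.append (S.sp u v)).append q2)
    have he : wlen S.w (S.sp a b) = wlen S.w q1 + wlen S.w p + wlen S.w q2 := by
      rw [hq, S.wlen_append', S.wlen_append']
    rw [he, S.wlen_append', S.wlen_append'] at hs
    have : wlen S.w (S.sp u v) = S.d u v := rfl
    linarith
  have heq : wlen S.w p = S.d u v := le_antisymm h2 h1
  exact ⟨S.sp_unique u v p hpath heq, heq⟩

/-- If `c` is on the shortest path from `u` to `v`, then `d c v ≤ d u v`. -/
lemma Setting.d_end_le {u v c : V} (hc : c ∈ (S.sp u v).support) :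
    S.d c v ≤ S.d u v := by
  classical
  have hspec := (S.sp u v).take_spec hc
  have : S.d u v = wlen S.w ((S.sp u v).takeUntil c hc) +
      wlen S.w ((S.sp u v).dropUntil c hc) := by
    conv_lhs => rw [Setting.d, ← hspec]
    exact S.wlen_append' _ _
  have h1 := S.d_le ((S.sp u v).dropUntil c hc)
  have h2 := S.wlen_nonneg' ((S.sp u v).takeUntil c hc)
  linarith
end setlems

/-- Counting: a set covered by a finite union of sets of size at most `k`. -/
lemma ncard_le_of_subset_biUnion {α β : Type} [Finite α] [Finite β] {N : Set β} {I : Set α}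
    {g : α → Set β} {k : ℕ} (hsub : N ⊆ ⋃ i ∈ I, g i)
    (hg : ∀ i ∈ I, (g i).ncard ≤ k) : N.ncard ≤ I.ncard * k := by
  have key : ∀ J : Set α, (∀ i ∈ J, (g i).ncard ≤ k) →
      (⋃ i ∈ J, g i).ncard ≤ J.ncard * k := by
    intro J
    refine Set.Finite.induction_on J (Set.toFinite J)
      (motive := fun s _ => (∀ i ∈ s, (g i).ncard ≤ k) → (⋃ i ∈ s, g i).ncard ≤ s.ncard * k)
      (by simp) ?_
    intro a s ha _ ih hg'
    rw [Set.biUnion_insert]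
    calc (g a ∪ ⋃ i ∈ s, g i).ncard ≤ (g a).ncard + (⋃ i ∈ s, g i).ncard :=
          Set.ncard_union_le _ _
      _ ≤ k + s.ncard * k := by
          gcongr
          · exact hg' a (Set.mem_insert a s)
          · exact ih fun i hi => hg' i (Set.mem_insert_of_mem a hi)
      _ = (insert a s).ncard * k := by
          rw [Set.ncard_insert_of_notMem ha (Set.toFinite s)]; ring
  calc N.ncard ≤ (⋃ i ∈ I, g i).ncard := Set.ncard_le_ncard hsub (Set.toFinite _)
    _ ≤ I.ncard * k := key I hg

/-- Structural lemma: walking from `u` towards `b'` along the shortest path,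
there is a first vertex `x` with `d x b' ≤ 2r`, having a predecessor `a`. -/
lemma Setting.exists_break {V : Type} [Fintype V] (S : Setting V) (r : ℝ)
    (hr : 0 < r) (b' : V) :
    ∀ (u : V) (p : S.G.Walk u b'), p = S.sp u b' → 2 * r < wlen S.w p →
    ∃ a x : V, S.G.Adj a x ∧ S.d x b' ≤ 2 * r ∧ 2 * r < S.d a b' ∧
      IsSubwalk (S.sp x b') (S.sp a b') ∧ IsSubwalk (S.sp a b') (S.sp u b') := by
  intro u p
  induction p with
  | nil =>
    intro _ hlen
    simp [wlen] at hlen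
    linarith
  | @cons u x bb hadj p' ih =>
    intro hp hlen
    have hsubp' : IsSubwalk p' (S.sp u bb) := by
      refine ⟨SimpleGraph.Walk.cons hadj SimpleGraph.Walk.nil, SimpleGraph.Walk.nil, ?_⟩
      rw [← hp]
      simp
    obtain ⟨hp'eq, hp'len⟩ := S.subwalk_eq_sp hsubp'
    by_cases hc : wlen S.w p' ≤ 2 * r
    · refine ⟨u, x, hadj, ?_, ?_, ?_, IsSubwalk.refl _⟩
      · rw [Setting.d, ← hp'eq]; exact hc
      · rw [Setting.d, ← hp]; exact hlen
      · rw [← hp'eq]; exact hsubp'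
    · push_neg at hc
      obtain ⟨a, x', h1, h2, h3, h4, h5⟩ := ih hp'eq hc
      exact ⟨a, x', h1, h2, h3, h4, h5.trans (hp'eq ▸ hsubp')⟩

/-- Bounded degree of the intersection graph: for `B ⊆ C`
with `C` an `(r,k)` vertex cover, each `b ∈ B` has at most `c` elements
`b' ∈ B`, `b' ≠ b`, with `d(b,b') ≤ 3r`. -/
theorem stmt13 (h k : ℕ) :
    ∃ c : ℕ, ∀ (V : Type) [Fintype V] (S : Setting V), S.HighwayDimLE h →
      ∀ r : ℝ, 0 < r → ∀ C : Set V, S.IsVertexCover r k C →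
        ∀ B : Set V, B ⊆ C → ∀ b ∈ B,
          {b' : V | b' ∈ B ∧ b' ≠ b ∧ S.d b b' ≤ 3 * r}.ncard ≤ c := by
  refine ⟨(h + 1) * k, ?_⟩
  intro V _ S hHD r hr C hC B hBC b hb
  obtain ⟨H, hHcard, hHhits⟩ := hHD r hr b
  have hsub : {b' : V | b' ∈ B ∧ b' ≠ b ∧ S.d b b' ≤ 3 * r} ⊆
      ⋃ c ∈ insert b H, (S.ball c (2 * r) ∩ C) := by
    rintro b' ⟨hbB, hne, hd3⟩
    by_cases hcase : S.d b b' ≤ 2 * r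
    · exact Set.mem_biUnion (Set.mem_insert b H) ⟨hcase, hBC hbB⟩
    · push_neg at hcase
      obtain ⟨a, x, hadj, hdx, hda, hsub1, hsub2⟩ :=
        S.exists_break r hr b' b (S.sp b b') rfl hcase
      obtain ⟨q1, q2, hq⟩ := hsub2
      have hdba : S.d b a ≤ r := by
        have he : S.d b b' = wlen S.w q1 + wlen S.w (S.sp a b') + wlen S.w q2 := by
          conv_lhs => rw [Setting.d, hq]
          rw [S.wlen_append', S.wlen_append']
        have h1 := S.d_le q1
        have h2 := S.wlen_nonneg' q2
        have h3 : wlen S.w (S.sp a b') = S.d a b' := rfl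
        linarith
      have hin : S.InSvr b r x b' := by
        refine ⟨a, b', Or.inr hadj, Or.inl rfl, by linarith, hsub1, a,
          SimpleGraph.Walk.start_mem_support _, by linarith⟩
      obtain ⟨c, hcH, hcsup⟩ := hHhits x b' hin
      have hcb' : S.d c b' ≤ 2 * r := le_trans (S.d_end_le hcsup) hdx
      exact Set.mem_biUnion (Set.mem_insert_of_mem _ hcH) ⟨hcb', hBC hbB⟩
  calc {b' : V | b' ∈ B ∧ b' ≠ b ∧ S.d b b' ≤ 3 * r}.ncard
      ≤ (insert b H).ncard * k :=
        ncard_le_of_subset_biUnion hsub (fun c _ => hC.2 c)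
    _ ≤ (h + 1) * k := by
        have hle : (insert b H).ncard ≤ h + 1 :=
          le_trans (Set.ncard_insert_le b H) (by omega)
        exact Nat.mul_le_mul_right k hle
end

section
/- Let C ⊆ V and r > 0. Let B be a minimum-cardinality subset of C satisfying C ⊆ ∪_{b∈B} B(b,r), and suppose |B| ≥ 2. Let IG be the graph with vertex set B having an edge between distinct b, b' ∈ B whenever d(b,b') ≤ 3r, and suppose IG is connected and has maximum degree at most Δ. Then there exists a set B' ⊆ B with |B'| ≤ (Δ/(Δ+1))·|B| such that C ⊆ ∪_{b∈B'} B(b, 8r); in particular, the minimum cardinality of a subset B'' ⊆ C with C ⊆ ∪_{b∈B''} B(b,8r) is at most (Δ/(Δ+1))·|B|. -/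
open SimpleGraph

/-!
A connected graph on at least two vertices has no isolated vertex, so by Ore's theorem it has a
dominating set containing at most half of its vertices: a minimal dominating set and its complement
both dominate. Take such a set `D` in the intersection graph of `B`. Every centre of `B` lies within
`3r` of a centre in `D`, so the balls of radius `4r ≤ 8r` around `D` cover `C`, and
`|D| ≤ |B| / 2 ≤ Δ/(Δ+1) · |B|` because `Δ ≥ 1`.
-/

def SimpleGraph.IsDominating {α : Type*} (G : SimpleGraph α) (D : Set α) : Prop :=
  ∀ v ∉ D, ∃ u ∈ D, G.Adj u v

namespace SimpleGraph

variable {α : Type*} {G : SimpleGraph α}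

theorem isDominating_univ : G.IsDominating Set.univ :=
  fun _ hv => absurd (Set.mem_univ _) hv

theorem isDominating_compl_of_minimal {D : Set α} (hnbr : ∀ v, ∃ u, G.Adj v u)
    (hD : Minimal G.IsDominating D) : G.IsDominating Dᶜ := by
  intro v hv
  rw [Set.notMem_compl_iff] at hv
  -- by minimality `D \ {v}` leaves some `u` undominated:
  -- either `u = v`, or `v` is the only neighbour of `u` in `D`
  have hsmaller : ¬ G.IsDominating (D \ {v}) := fun h =>
    (hD.2 h Set.sdiff_subset hv).2 rfl
  simp only [IsDominating, not_forall, not_exists, not_and] at hsmaller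
  obtain ⟨u, hu, hundom⟩ := hsmaller
  by_cases huv : u = v
  · subst huv
    obtain ⟨x, hx⟩ := hnbr u
    exact ⟨x, fun hxD => hundom x ⟨hxD, hx.ne'⟩ hx.symm, hx.symm⟩
  · have huD : u ∉ D := fun h => hu ⟨h, huv⟩
    obtain ⟨w, hwD, hwu⟩ := hD.1 u huD
    have hwv : w = v := by_contra fun h => hundom w ⟨hwD, h⟩ hwu
    exact ⟨u, huD, hwv ▸ hwu.symm⟩

theorem exists_isDominating_two_mul_ncard_le [Finite α] (hnbr : ∀ v, ∃ u, G.Adj v u) :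
    ∃ D : Set α, G.IsDominating D ∧ 2 * D.ncard ≤ Nat.card α := by
  obtain ⟨D, hD⟩ := exists_minimal_of_wellFoundedLT G.IsDominating ⟨_, isDominating_univ⟩
  have hsum := Set.ncard_add_ncard_compl D
  rcases le_total D.ncard Dᶜ.ncard with hle | hle
  · exact ⟨D, hD.1, by omega⟩
  · exact ⟨Dᶜ, isDominating_compl_of_minimal hnbr hD, by omega⟩

end SimpleGraph

theorem wlen_append {V : Type*} {G : SimpleGraph V} (w : Sym2 V → ℝ) {u v x : V}
    (p : G.Walk u v) (q : G.Walk v x) :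
    wlen w (p.append q) = wlen w p + wlen w q := by
  simp [wlen, SimpleGraph.Walk.edges_append]

theorem wlen_reverse {V : Type*} {G : SimpleGraph V} (w : Sym2 V → ℝ) {u v : V}
    (p : G.Walk u v) : wlen w p.reverse = wlen w p := by
  simp [wlen, SimpleGraph.Walk.edges_reverse, List.sum_reverse]

namespace Setting

variable {V : Type} [Fintype V] (S : Setting V)

theorem d_self (v : V) : S.d v v = 0 := by
  simp [d, wlen, (Walk.isPath_iff_nil.mp (S.sp_isPath v v)).eq_nil]

theorem d_comm (u v : V) : S.d u v = S.d v u := by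
  have h : ∀ a b : V, S.d a b ≤ S.d b a := fun a b => by
    simpa only [d, wlen_reverse] using S.sp_shortest a b (S.sp b a).reverse
  exact le_antisymm (h u v) (h v u)

theorem d_triangle (u v x : V) : S.d u x ≤ S.d u v + S.d v x := by
  simpa only [d, wlen_append] using S.sp_shortest u x ((S.sp u v).append (S.sp v x))

theorem ball_mono {v : V} {r r' : ℝ} (h : r ≤ r') : S.ball v r ⊆ S.ball v r' :=
  fun _ hx => le_trans hx h

theorem ball_subset_ball_of_d_le {u v : V} {r s : ℝ} (h : S.d u v ≤ s) :
    S.ball v r ⊆ S.ball u (s + r) :=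
  fun x hx => (S.d_triangle u v x).trans (add_le_add h hx)

theorem subset_biUnion_ball_of_forall_d_le {C B D : Set V} {r s : ℝ}
    (hcover : C ⊆ ⋃ b ∈ B, S.ball b r) (hnear : ∀ b ∈ B, ∃ u ∈ D, S.d u b ≤ s) :
    C ⊆ ⋃ u ∈ D, S.ball u (s + r) := by
  intro c hc
  obtain ⟨b, hb, hcb⟩ := Set.mem_iUnion₂.mp (hcover hc)
  obtain ⟨u, hu, hub⟩ := hnear b hb
  exact Set.mem_iUnion₂.mpr ⟨u, hu, S.ball_subset_ball_of_d_le hub hcb⟩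

end Setting

theorem cast_le_div_add_one_mul_of_two_mul_le {k n Δ : ℕ} (hΔ : 1 ≤ Δ) (h : 2 * k ≤ n) :
    (k : ℝ) ≤ Δ / (Δ + 1) * n := by
  have hΔ' : (1 : ℝ) ≤ Δ := by exact_mod_cast hΔ
  have h' : (2 : ℝ) * k ≤ n := by exact_mod_cast h
  rw [div_mul_eq_mul_div, le_div_iff₀ (by positivity)]
  nlinarith [mul_nonneg (sub_nonneg.mpr hΔ') (Nat.cast_nonneg (α := ℝ) n)]

theorem stmt14_general {V : Type} [Fintype V] (S : Setting V) (C : Set V) (r : ℝ)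
    (hr : 0 < r) (B : Set V) (hBC : B ⊆ C)
    (hcover : C ⊆ ⋃ b ∈ B, S.ball b r)
    (hB2 : 2 ≤ B.ncard) (Δ : ℕ)
    (hconn : (SimpleGraph.fromRel
      (fun b b' : ↥B => S.d (b : V) (b' : V) ≤ 3 * r)).Connected)
    (hdeg : ∀ b : ↥B,
      ((SimpleGraph.fromRel
        (fun b b' : ↥B => S.d (b : V) (b' : V) ≤ 3 * r)).neighborSet b).ncard ≤ Δ) :
    (∃ B' : Set V, B' ⊆ B ∧ (B'.ncard : ℝ) ≤ (Δ : ℝ) / (Δ + 1) * B.ncard ∧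
        C ⊆ ⋃ b ∈ B', S.ball b (8 * r)) ∧
    (∃ B'' : Set V, B'' ⊆ C ∧ (B''.ncard : ℝ) ≤ (Δ : ℝ) / (Δ + 1) * B.ncard ∧
        C ⊆ ⋃ b ∈ B'', S.ball b (8 * r)) := by
  have hB : Nontrivial ↥B := Set.nontrivial_coe_sort.mpr (Set.one_lt_ncard_iff_nontrivial.mp hB2)
  have hnbr := hconn.preconnected.exists_adj_of_nontrivial
  obtain ⟨D, hD, hDcard⟩ := exists_isDominating_two_mul_ncard_le hnbr
  have hΔ : 1 ≤ Δ := by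
    obtain ⟨b⟩ := hB.to_nonempty
    exact ((Set.ncard_pos (Set.toFinite _)).mpr (hnbr b)).trans_le (hdeg b)
  set B' : Set V := Subtype.val '' D
  have hB'card : (B'.ncard : ℝ) ≤ Δ / (Δ + 1) * B.ncard := by
    refine cast_le_div_add_one_mul_of_two_mul_le hΔ ?_
    rwa [Set.ncard_image_of_injective _ Subtype.val_injective, ← Nat.card_coe_set_eq]
  have hnear : ∀ b ∈ B, ∃ u ∈ B', S.d u b ≤ 3 * r := by
    intro b hb
    by_cases hbD : ⟨b, hb⟩ ∈ D
    · exact ⟨b, ⟨_, hbD, rfl⟩, by rw [S.d_self]; positivity⟩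
    · obtain ⟨u, huD, hub⟩ := hD _ hbD
      refine ⟨u, ⟨u, huD, rfl⟩, ?_⟩
      rcases (fromRel_adj _ _ _).mp hub |>.2 with h | h
      exacts [h, S.d_comm b u ▸ h]
  have hB'cover : C ⊆ ⋃ u ∈ B', S.ball u (8 * r) :=
    (S.subset_biUnion_ball_of_forall_d_le hcover hnear).trans
      (Set.biUnion_mono subset_rfl fun _ _ => S.ball_mono (by linarith))
  have hB'B : B' ⊆ B := Subtype.coe_image_subset B D
  exact ⟨⟨B', hB'B, hB'card, hB'cover⟩, ⟨B', hB'B.trans hBC, hB'card, hB'cover⟩⟩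

/-- From a minimum ball cover `B` of `C` at radius `r` whose
intersection graph is connected with maximum degree `Δ`, one obtains a ball
cover of `C` at radius `8r` of size at most `(Δ/(Δ+1))·|B|`. -/
theorem stmt14 {V : Type} [Fintype V] (S : Setting V) (C : Set V) (r : ℝ)
    (hr : 0 < r) (B : Set V) (hBC : B ⊆ C)
    (hcover : C ⊆ ⋃ b ∈ B, S.ball b r)
    (hmin : ∀ B2 : Set V, B2 ⊆ C → C ⊆ ⋃ b ∈ B2, S.ball b r → B.ncard ≤ B2.ncard)
    (hB2 : 2 ≤ B.ncard) (Δ : ℕ)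
    (hconn : (SimpleGraph.fromRel
      (fun b b' : ↥B => S.d (b : V) (b' : V) ≤ 3 * r)).Connected)
    (hdeg : ∀ b : ↥B,
      ((SimpleGraph.fromRel
        (fun b b' : ↥B => S.d (b : V) (b' : V) ≤ 3 * r)).neighborSet b).ncard ≤ Δ) :
    (∃ B' : Set V, B' ⊆ B ∧ (B'.ncard : ℝ) ≤ (Δ : ℝ) / (Δ + 1) * B.ncard ∧
        C ⊆ ⋃ b ∈ B', S.ball b (8 * r)) ∧
    (∃ B'' : Set V, B'' ⊆ C ∧ (B''.ncard : ℝ) ≤ (Δ : ℝ) / (Δ + 1) * B.ncard ∧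
        C ⊆ ⋃ b ∈ B'', S.ball b (8 * r)) :=
  stmt14_general S C r hr B hBC hcover hB2 Δ hconn hdeg
end
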